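/- arXiv:1402.6633 — 5 statements merged into one kernel-verified Lean document; each statement's English description precedes it below -/
import Mathlib

section
/- Let P_s ≥ 0, σ_v² > 0, σ_q² ≥ 0, and K_f = P_s/(P_s+σ_v²). Define g(x) = ((x−P_s)+K_f·P_s)²/((x−P_s)+K_f²·P_s+R) for x ≥ P_s, where R = K_f²·σ_v²+σ_q². Then g is monotonically non-decreasing on [P_s, ∞), i.e., for all x₁ ≥ x₂ ≥ P_s, g(x₁) ≥ g(x₂). -/
theorem g_monotone (Ps σv2 σq2 : ℝ) (hPs : Ps ≥ 0) (hv : σv2 > 0) (hq : σq2 ≥ 0)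
    (Kf R : ℝ) (hKf : Kf = Ps / (Ps + σv2)) (hR : R = Kf ^ 2 * σv2 + σq2)
    (g : ℝ → ℝ)
    (hg : ∀ x, g x = ((x - Ps) + Kf * Ps) ^ 2 / ((x - Ps) + Kf ^ 2 * Ps + R)) :
    ∀ x₁ x₂ : ℝ, x₂ ≥ Ps → x₁ ≥ x₂ → g x₁ ≥ g x₂ := by
  intro x₁ x₂ h₂ h₁₂
  have hsum : Ps + σv2 > 0 := by linarith
  have hKfe : Kf * (Ps + σv2) = Ps := by
    rw [hKf]; field_simp
  have hKf0 : Kf ≥ 0 := by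
    rw [hKf]; positivity
  have hkey : Kf ^ 2 * Ps + R = Kf * Ps + σq2 := by
    have : Kf ^ 2 * Ps + Kf ^ 2 * σv2 = Kf * (Kf * (Ps + σv2)) := by ring
    rw [hR]; rw [hKfe] at this; linarith
  set u := (x₁ - Ps) + Kf * Ps with hu
  set v := (x₂ - Ps) + Kf * Ps with hv'
  have hv0 : v ≥ 0 := by
    have : Kf * Ps ≥ 0 := mul_nonneg hKf0 hPs
    simp only [hv']; linarith
  have huv : u ≥ v := by simp only [hu, hv']; linarith
  have hg1 : g x₁ = u ^ 2 / (u + σq2) := by rw [hg]; rw [show (x₁ - Ps) + Kf ^ 2 * Ps + R = u + σq2 by simp only [hu]; linarith]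
  have hg2 : g x₂ = v ^ 2 / (v + σq2) := by rw [hg]; rw [show (x₂ - Ps) + Kf ^ 2 * Ps + R = v + σq2 by simp only [hv']; linarith]
  rw [hg1, hg2]
  rcases eq_or_lt_of_le (by linarith : (0:ℝ) ≤ v + σq2) with h0 | h0
  · rw [← h0, div_zero]
    exact div_nonneg (sq_nonneg u) (by linarith)
  · have hu0 : u + σq2 > 0 := by linarith
    rw [ge_iff_le, div_le_div_iff₀ h0 hu0]
    nlinarith [mul_nonneg hv0 (sub_nonneg.mpr huv), mul_nonneg hq (sub_nonneg.mpr huv)]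
end

section
/- Let a, P_s, σ_w², σ_v², σ_q² be real numbers with P_s ≥ 0, σ_v² > 0, σ_q² ≥ 0, and let p ∈ [0,1]. Set K_f = P_s/(P_s+σ_v²), R = K_f²σ_v²+σ_q², and define F(x,0) = a²x + σ_w² − (1−p)·a²K_f²P_s²/(K_f²P_s+R) and F(x,1) = a²x + σ_w² − (1−p)·a²((x−P_s)+K_fP_s)²/((x−P_s)+K_f²P_s+R) for x ≥ P_s. Then F is submodular: for all x₁ ≥ x₂ ≥ P_s, F(x₁,1) + F(x₂,0) ≤ F(x₁,0) + F(x₂,1). -/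
private lemma sq_div_mono (q : ℝ) (hq : 0 ≤ q) {n m : ℝ} (hn : 0 ≤ n) (hnm : n ≤ m) :
    n ^ 2 / (n + q) ≤ m ^ 2 / (m + q) := by
  rcases eq_or_lt_of_le (by linarith : (0:ℝ) ≤ m + q) with h | h
  · have hm : m = 0 := by nlinarith
    have hq0 : q = 0 := by linarith
    have hn0 : n = 0 := by linarith
    simp [hm, hq0, hn0]
  rcases eq_or_lt_of_le (by linarith : (0:ℝ) ≤ n + q) with h2 | h2
  · have hn0 : n = 0 := by nlinarith
    rw [hn0]
    simpa using div_nonneg (sq_nonneg m) h.le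
  rw [div_le_div_iff₀ h2 h]
  have hm : 0 ≤ m := le_trans hn hnm
  nlinarith [mul_nonneg (mul_nonneg hn hm) (sub_nonneg.2 hnm),
    mul_nonneg (mul_nonneg hq (sub_nonneg.2 hnm)) (by linarith : (0:ℝ) ≤ m + n)]

theorem F_submodular (a Ps σw2 σv2 σq2 p : ℝ) (hPs : Ps ≥ 0) (hv : σv2 > 0)
    (hq : σq2 ≥ 0) (hp0 : 0 ≤ p) (hp1 : p ≤ 1)
    (Kf R : ℝ) (hKf : Kf = Ps / (Ps + σv2)) (hR : R = Kf ^ 2 * σv2 + σq2)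
    (F : ℝ → Fin 2 → ℝ)
    (hF0 : ∀ x, F x 0 = a ^ 2 * x + σw2 -
      (1 - p) * (a ^ 2 * Kf ^ 2 * Ps ^ 2 / (Kf ^ 2 * Ps + R)))
    (hF1 : ∀ x, F x 1 = a ^ 2 * x + σw2 -
      (1 - p) * (a ^ 2 * ((x - Ps) + Kf * Ps) ^ 2 / ((x - Ps) + Kf ^ 2 * Ps + R))) :
    ∀ x₁ x₂ : ℝ, x₂ ≥ Ps → x₁ ≥ x₂ → F x₁ 1 + F x₂ 0 ≤ F x₁ 0 + F x₂ 1 := by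
  intro x₁ x₂ h2 h12
  rw [hF0, hF0, hF1, hF1]
  have hden : (0:ℝ) < Ps + σv2 := by linarith
  have hKf0 : 0 ≤ Kf := by rw [hKf]; positivity
  have key : Kf ^ 2 * Ps + R = Kf * Ps + σq2 := by
    rw [hR, hKf]; field_simp; ring
  set n1 := (x₁ - Ps) + Kf * Ps with hn1
  set n2 := (x₂ - Ps) + Kf * Ps with hn2
  have hKfPs : 0 ≤ Kf * Ps := mul_nonneg hKf0 hPs
  have hn2nn : 0 ≤ n2 := by simp [hn2]; nlinarith
  have hle : n2 ≤ n1 := by simp [hn1, hn2]; linarith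
  have hd1 : x₁ - Ps + Kf ^ 2 * Ps + R = n1 + σq2 := by rw [hn1]; linarith [key]
  have hd2 : x₂ - Ps + Kf ^ 2 * Ps + R = n2 + σq2 := by rw [hn2]; linarith [key]
  rw [hd1, hd2]
  have mono : n2 ^ 2 / (n2 + σq2) ≤ n1 ^ 2 / (n1 + σq2) :=
    sq_div_mono σq2 hq hn2nn hle
  have h1p : 0 ≤ 1 - p := by linarith
  have ha2 : (0:ℝ) ≤ a ^ 2 := sq_nonneg a
  have step : (1 - p) * (a ^ 2 * n2 ^ 2 / (n2 + σq2)) ≤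
      (1 - p) * (a ^ 2 * n1 ^ 2 / (n1 + σq2)) := by
    apply mul_le_mul_of_nonneg_left _ h1p
    rw [mul_div_assoc, mul_div_assoc]
    exact mul_le_mul_of_nonneg_left mono ha2
  linarith
end

section
/- Let a, σ_w², σ_v², σ_q² be reals with σ_v² > 0, σ_q² ≥ 0, σ_w² ≥ 0, and let P_s ≥ 0 satisfy the scalar algebraic Riccati equation P_s = a²P_s + σ_w² − a²P_s²/(P_s+σ_v²). Set K_f = P_s/(P_s+σ_v²) and R = K_f²σ_v² + σ_q². Then for every x ≥ P_s and each ν ∈ {0,1}, the updated variance satisfies F(x,ν) ≥ P_s with p=0, where F(x,1) = a²x + σ_w² − a²((x−P_s)+K_fP_s)²/((x−P_s)+K_f²P_s+R) and F(x,0) = a²x + σ_w² − a²K_f²P_s²/(K_f²P_s+R). -/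
lemma riccati_aux (c t : ℝ) (hc : 0 ≤ c) (ht : 0 ≤ t) : c ^ 2 / (c + t) ≤ c := by
  rcases eq_or_lt_of_le (by linarith : (0:ℝ) ≤ c + t) with h | h
  · have hc0 : c = 0 := by linarith
    simp [hc0]
  · rw [div_le_iff₀ h]; nlinarith

theorem riccati_invariance (a Ps σw2 σv2 σq2 : ℝ) (hPs : Ps ≥ 0) (hv : σv2 > 0)
    (hq : σq2 ≥ 0) (hw : σw2 ≥ 0)
    (hare : Ps = a ^ 2 * Ps + σw2 - a ^ 2 * Ps ^ 2 / (Ps + σv2))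
    (Kf R : ℝ) (hKf : Kf = Ps / (Ps + σv2)) (hR : R = Kf ^ 2 * σv2 + σq2)
    (F : ℝ → Fin 2 → ℝ)
    (hF0 : ∀ x, F x 0 = a ^ 2 * x + σw2 -
      a ^ 2 * Kf ^ 2 * Ps ^ 2 / (Kf ^ 2 * Ps + R))
    (hF1 : ∀ x, F x 1 = a ^ 2 * x + σw2 -
      a ^ 2 * ((x - Ps) + Kf * Ps) ^ 2 / ((x - Ps) + Kf ^ 2 * Ps + R)) :
    ∀ x : ℝ, x ≥ Ps → ∀ ν : Fin 2, F x ν ≥ Ps := by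
  intro x hx ν
  have hS : 0 < Ps + σv2 := by linarith
  set c : ℝ := Ps ^ 2 / (Ps + σv2) with hc
  have hc0 : 0 ≤ c := by positivity
  have hKfPs : Kf * Ps = c := by
    rw [hKf, hc]; field_simp
  have hden : Kf ^ 2 * Ps + R = c + σq2 := by
    rw [hR, hKf, hc]; field_simp; ring
  have hdiv : a ^ 2 * Ps ^ 2 / (Ps + σv2) = a ^ 2 * c := by
    rw [hc, mul_div_assoc]
  have hσw : σw2 = Ps - a ^ 2 * Ps + a ^ 2 * c := by
    rw [hdiv] at hare; linarith
  fin_cases ν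
  · show F x 0 ≥ Ps
    rw [hF0 x]
    have h1 : a ^ 2 * Kf ^ 2 * Ps ^ 2 / (Kf ^ 2 * Ps + R)
        = a ^ 2 * (c ^ 2 / (c + σq2)) := by
      rw [hden, show a ^ 2 * Kf ^ 2 * Ps ^ 2 = a ^ 2 * (Kf * Ps) ^ 2 from by ring,
        hKfPs, mul_div_assoc]
    rw [h1, hσw]
    have h2 := riccati_aux c σq2 hc0 hq
    have h3 : a ^ 2 * (x - Ps) ≥ 0 := mul_nonneg (sq_nonneg a) (by linarith)
    have h4 : a ^ 2 * (c - c ^ 2 / (c + σq2)) ≥ 0 :=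
      mul_nonneg (sq_nonneg a) (by linarith)
    nlinarith
  · show F x 1 ≥ Ps
    rw [hF1 x, hKfPs]
    have hd0 : 0 ≤ x - Ps + c := by linarith
    have h1 : x - Ps + Kf ^ 2 * Ps + R = (x - Ps + c) + σq2 := by linarith
    rw [h1]
    have h2 := riccati_aux (x - Ps + c) σq2 hd0 hq
    have h3 : a ^ 2 * ((x - Ps + c) ^ 2 / (x - Ps + c + σq2)) ≤ a ^ 2 * (x - Ps + c) :=
      mul_le_mul_of_nonneg_left h2 (sq_nonneg a)
    have h4 : a ^ 2 * (x - Ps + c) ^ 2 / (x - Ps + c + σq2)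
        = a ^ 2 * ((x - Ps + c) ^ 2 / (x - Ps + c + σq2)) := mul_div_assoc _ _ _
    rw [hσw]
    nlinarith
end

section
/- Let a, σ_w², σ_v², σ_q², P_s, K_f, R be as before (P_s ≥ 0, σ_v² > 0, σ_q² ≥ 0). Define L(x) = a²x + σ_w² − a²((x−P_s)+K_fP_s)²/((x−P_s)+K_f²P_s+R) for x ≥ P_s. Then L is concave on [P_s,∞): for all x₁,x₂ ≥ P_s and t ∈ [0,1], L(t·x₁+(1−t)·x₂) ≥ t·L(x₁)+(1−t)·L(x₂). -/
lemma aux_convex (e y1 y2 t : ℝ) (h1 : 0 < y1) (h2 : 0 < y2) (ht0 : 0 ≤ t) (ht1 : t ≤ 1) :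
    (t*y1+(1-t)*y2 + e)^2 / (t*y1+(1-t)*y2) ≤ t*((y1+e)^2/y1) + (1-t)*((y2+e)^2/y2) := by
  have hyt : 0 < t*y1+(1-t)*y2 := by
    rcases le_total y1 y2 with h | h
    · nlinarith [mul_nonneg (by linarith : (0:ℝ) ≤ 1-t) (by linarith : (0:ℝ) ≤ y2-y1)]
    · nlinarith [mul_nonneg ht0 (by linarith : (0:ℝ) ≤ y1-y2)]
  rw [← mul_div_assoc, ← mul_div_assoc, div_add_div _ _ (ne_of_gt h1) (ne_of_gt h2),
    div_le_div_iff₀ hyt (mul_pos h1 h2)]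
  nlinarith [mul_nonneg (mul_nonneg (mul_nonneg ht0 (by linarith : (0:ℝ) ≤ 1-t)) (sq_nonneg e)) (sq_nonneg (y1-y2))]

theorem riccati_concave (a Ps σw2 σv2 σq2 : ℝ) (hPs : Ps ≥ 0) (hv : σv2 > 0)
    (hq : σq2 ≥ 0)
    (Kf R : ℝ) (hKf : Kf = Ps / (Ps + σv2)) (hR : R = Kf ^ 2 * σv2 + σq2)
    (L : ℝ → ℝ)
    (hL : ∀ x, L x = a ^ 2 * x + σw2 -
      a ^ 2 * ((x - Ps) + Kf * Ps) ^ 2 / ((x - Ps) + Kf ^ 2 * Ps + R)) :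
    ∀ x₁ x₂ t : ℝ, x₁ ≥ Ps → x₂ ≥ Ps → 0 ≤ t → t ≤ 1 →
      L (t * x₁ + (1 - t) * x₂) ≥ t * L x₁ + (1 - t) * L x₂ := by
  intro x1 x2 t hx1 hx2 ht0 ht1
  have hc : 0 ≤ Kf ^ 2 * Ps + R := by
    have : 0 ≤ R := by rw [hR]; positivity
    nlinarith [sq_nonneg Kf]
  rcases eq_or_lt_of_le hc with h0 | hpos
  · -- degenerate case: Kf^2*Ps + R = 0
    have hRnn : 0 ≤ R := by rw [hR]; positivity
    have hKfsq : Kf ^ 2 * σv2 = 0 := by nlinarith [sq_nonneg Kf]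
    have hKf0 : Kf = 0 := by
      rcases mul_eq_zero.mp hKfsq with h | h
      · exact pow_eq_zero_iff (n := 2) (by norm_num) |>.mp h
      · linarith
    have hPs0 : Ps = 0 := by
      rw [hKf0] at hKf
      have hne : Ps + σv2 ≠ 0 := by linarith
      field_simp at hKf
      linarith [hKf]
    have hR0 : R = 0 := by rw [hKf0, hPs0] at h0; linarith [h0]
    have hLx : ∀ x : ℝ, 0 ≤ x → L x = σw2 := by
      intro x hx
      rw [hL, hPs0, hKf0, hR0]
      rcases eq_or_lt_of_le hx with hx0 | hx0
      · simp [← hx0]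
      · field_simp
        ring
    have hxt : (0:ℝ) ≤ t * x1 + (1 - t) * x2 := by
      rw [hPs0] at hx1 hx2
      have := mul_nonneg ht0 hx1
      have := mul_nonneg (by linarith : (0:ℝ) ≤ 1 - t) hx2
      linarith
    rw [hLx x1 (by linarith), hLx x2 (by linarith), hLx (t*x1+(1-t)*x2) hxt]
    linarith
  · set c := Kf ^ 2 * Ps + R with hcdef
    set e := Kf * Ps - c with hedef
    have key : ∀ x : ℝ, L x = a^2*x + σw2 - a^2*(((x - Ps + c) + e)^2 / (x - Ps + c)) := by
      intro x
      rw [hL x, show (x - Ps) + Kf*Ps = (x - Ps + c) + e by rw [hedef]; ring,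
        show (x - Ps) + Kf^2*Ps + R = x - Ps + c by rw [hcdef]; ring, mul_div_assoc]
    set y1 := x1 - Ps + c with hy1
    set y2 := x2 - Ps + c with hy2
    have h1 : 0 < y1 := by rw [hy1]; linarith
    have h2 : 0 < y2 := by rw [hy2]; linarith
    rw [key, key, key, show t*x1+(1-t)*x2 - Ps + c = t*y1+(1-t)*y2 by rw [hy1, hy2]; ring,
      show x1 - Ps + c = y1 from hy1.symm, show x2 - Ps + c = y2 from hy2.symm]
    have haux := aux_convex e y1 y2 t h1 h2 ht0 ht1
    have hmul := mul_le_mul_of_nonneg_left haux (sq_nonneg a)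
    rw [ge_iff_le]
    nlinarith [hmul]
end

section
/- Under the assumptions of the previous statement, with P^{1,1} := E[(x−x̂ʳ)(x−x̂ʳ)ᵀ|𝒢], P_s := E[(x−x̂ˢ)(x−x̂ˢ)ᵀ|𝒢], the cross-covariance and sensor-estimate covariances satisfy: E[(x−x̂ʳ)(x̂ˢ−x̂ʳ)ᵀ|𝒢] = P^{1,1} − P_s and E[(x̂ˢ−x̂ʳ)(x̂ˢ−x̂ʳ)ᵀ|𝒢] = P^{1,1} − P_s. In particular, the augmented error covariance matrix [[P^{1,1}, P^{1,2}],[P^{1,2}, P^{2,2}]] has P^{1,2} = P^{2,2} = P^{1,1} − P_s. -/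
open MeasureTheory

/-!
Write `x - x̂ʳ = e + u` with `e = x - x̂ˢ` the sensor error and `u = x̂ˢ - x̂ʳ`. Since
`E[e | ℱ] = 0` and `u` is `ℱ`-measurable, the tower property through `𝒢 ⊆ ℱ` kills every
conditional cross moment `E[e uᵀ | 𝒢]`. Hence `P¹¹ = E[e eᵀ | 𝒢] + E[u uᵀ | 𝒢] = P_s + E[u uᵀ | 𝒢]`
and `E[(e + u) uᵀ | 𝒢] = E[u uᵀ | 𝒢]`.
-/

section

variable {Ω : Type*} {m0 : MeasurableSpace Ω} {μ : Measure Ω} {G F : MeasurableSpace Ω}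
  {e e' u u' : Ω → ℝ}

theorem condExp_sub_condExp_ae_eq_zero (hF : F ≤ m0) [SigmaFinite (μ.trim hF)] {f : Ω → ℝ}
    (hf : Integrable f μ) : μ[f - μ[f|F]|F] =ᵐ[μ] 0 := by
  refine (condExp_sub hf integrable_condExp F).trans ?_
  rw [condExp_of_stronglyMeasurable hF stronglyMeasurable_condExp integrable_condExp, sub_self]

theorem condExp_mul_ae_eq_zero_of_condExp_ae_eq_zero (hGF : G ≤ F) (hF : F ≤ m0)
    [SigmaFinite (μ.trim hF)] (hu : StronglyMeasurable[F] u) (heu : Integrable (e * u) μ)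
    (he : Integrable e μ) (he0 : μ[e|F] =ᵐ[μ] 0) : μ[e * u|G] =ᵐ[μ] 0 := by
  have hF0 : μ[e * u|F] =ᵐ[μ] 0 := by
    filter_upwards [condExp_mul_of_stronglyMeasurable_right hu heu he, he0] with ω h h0
    simp [h, h0]
  calc μ[e * u|G] =ᵐ[μ] μ[μ[e * u|F]|G] := (condExp_condExp_of_le hGF hF).symm
    _ =ᵐ[μ] μ[0|G] := condExp_congr_ae hF0
    _ = 0 := condExp_zero

variable [IsFiniteMeasure μ]

theorem condExp_add_mul_ae_eq (hGF : G ≤ F) (hF : F ≤ m0) (he : MemLp e 2 μ)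
    (hu : MemLp u 2 μ) (hu' : MemLp u' 2 μ) (hu'F : StronglyMeasurable[F] u')
    (he0 : μ[e|F] =ᵐ[μ] 0) : μ[(e + u) * u'|G] =ᵐ[μ] μ[u * u'|G] := by
  rw [add_mul]
  filter_upwards [condExp_add (m := G) (he.integrable_mul hu') (hu.integrable_mul hu'),
    condExp_mul_ae_eq_zero_of_condExp_ae_eq_zero hGF hF hu'F (he.integrable_mul hu')
      (he.integrable one_le_two) he0] with ω h h0
  simp [h, h0]

theorem condExp_add_mul_add_ae_eq (hGF : G ≤ F) (hF : F ≤ m0) (he : MemLp e 2 μ)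
    (he' : MemLp e' 2 μ) (hu : MemLp u 2 μ) (hu' : MemLp u' 2 μ)
    (huF : StronglyMeasurable[F] u) (hu'F : StronglyMeasurable[F] u')
    (he0 : μ[e|F] =ᵐ[μ] 0) (he'0 : μ[e'|F] =ᵐ[μ] 0) :
    μ[(e + u) * (e' + u')|G] =ᵐ[μ] μ[e * e'|G] + μ[u * u'|G] := by
  have hsplit : (e + u) * (e' + u') = e * e' + (e' * u + (e + u) * u') := by ring
  have hint : Integrable (e' * u + (e + u) * u') μ :=
    (he'.integrable_mul hu).add ((he.add hu).integrable_mul hu')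
  rw [hsplit]
  filter_upwards [condExp_add (m := G) (he.integrable_mul he') hint,
    condExp_add (m := G) (he'.integrable_mul hu) ((he.add hu).integrable_mul hu'),
    condExp_mul_ae_eq_zero_of_condExp_ae_eq_zero hGF hF huF (he'.integrable_mul hu)
      (he'.integrable one_le_two) he'0,
    condExp_add_mul_ae_eq hGF hF he hu hu' hu'F he0] with ω h₁ h₂ h₃ h₄
  simp [h₁, h₂, h₃, h₄]

end

theorem augmented_covariance_structure {Ω : Type*} {m0 : MeasurableSpace Ω}
    (μ : Measure Ω) [IsProbabilityMeasure μ]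
    (G F : MeasurableSpace Ω) (hGF : G ≤ F) (hFm0 : F ≤ m0)
    (d : ℕ) (x : Ω → Fin d → ℝ)
    (hx : ∀ i, MemLp (fun ω => x ω i) 2 μ)
    (xs xr : Fin d → Ω → ℝ)
    (hxs : ∀ i, xs i = μ[fun ω => x ω i | F])
    (hxr : ∀ i, xr i = μ[fun ω => x ω i | G])
    (P11 Ps : Fin d → Fin d → Ω → ℝ)
    (hP11 : ∀ i j, P11 i j = μ[fun ω => (x ω i - xr i ω) * (x ω j - xr j ω) | G])
    (hPs : ∀ i j, Ps i j = μ[fun ω => (x ω i - xs i ω) * (x ω j - xs j ω) | G]) :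
    (∀ i j,
      μ[fun ω => (x ω i - xr i ω) * (xs j ω - xr j ω) | G] =ᵐ[μ]
        fun ω => P11 i j ω - Ps i j ω) ∧
    (∀ i j,
      μ[fun ω => (xs i ω - xr i ω) * (xs j ω - xr j ω) | G] =ᵐ[μ]
        fun ω => P11 i j ω - Ps i j ω) := by
  set e : Fin d → Ω → ℝ := fun i ω => x ω i - xs i ω
  set u : Fin d → Ω → ℝ := fun i ω => xs i ω - xr i ω
  have hxs2 i : MemLp (xs i) 2 μ := hxs i ▸ (hx i).condExp one_le_two
  have hxr2 i : MemLp (xr i) 2 μ := hxr i ▸ (hx i).condExp one_le_two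
  have he i : MemLp (e i) 2 μ := (hx i).sub (hxs2 i)
  have hu i : MemLp (u i) 2 μ := (hxs2 i).sub (hxr2 i)
  have huF i : StronglyMeasurable[F] (u i) := by
    simp only [u, hxs i, hxr i]
    exact stronglyMeasurable_condExp.sub (stronglyMeasurable_condExp.mono hGF)
  have he0 i : μ[e i|F] =ᵐ[μ] 0 := by
    change μ[(fun ω => x ω i) - xs i|F] =ᵐ[μ] 0
    rw [hxs i]
    exact condExp_sub_condExp_ae_eq_zero hFm0 ((hx i).integrable one_le_two)
  have hsplit i : (fun ω => x ω i - xr i ω) = e i + u i := funext fun ω => by simp [e, u]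
  have huu i j : μ[u i * u j|G] =ᵐ[μ] fun ω => P11 i j ω - Ps i j ω := by
    have h := condExp_add_mul_add_ae_eq hGF hFm0 (he i) (he j) (hu i) (hu j) (huF i) (huF j)
      (he0 i) (he0 j)
    rw [← hsplit, ← hsplit] at h
    rw [hP11, hPs]
    filter_upwards [h] with ω hω
    exact eq_sub_of_add_eq' hω.symm
  refine ⟨fun i j => ?_, huu⟩
  have h := condExp_add_mul_ae_eq hGF hFm0 (he i) (hu i) (hu j) (huF j) (he0 i)
  rw [← hsplit] at h
  exact h.trans (huu i j)
end
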